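/- Let f ∈ Ω and let z ∈ ℂ with 0 < |z| < (e − 1)/e. Then f(z) ≠ 0 and, with w = z·f'(z)/f(z), one has w ≠ 2 and |log(w/(2 − w))| < 1, where log denotes the principal branch of the complex logarithm; i.e., w lies in the image of the modified sigmoid function 2/(1 + e^{−ζ}) on 𝔻. (That is, the S*_{SG}-radius for the class Ω is (e − 1)/e.) -/

import Mathlib

open Complex Metric

/-- The open unit disc in `ℂ`. -/
def unitDisc : Set ℂ := Metric.ball 0 1

/-- `f ∈ 𝒜ₙ`: `f` is analytic on the unit disc with power series
`f(z) = z + ∑_{k=n+1}^∞ a_k z^k`. -/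
def MemA (n : ℕ) (f : ℂ → ℂ) : Prop :=
  DifferentiableOn ℂ f unitDisc ∧
    ∃ a : ℕ → ℂ, ∀ z ∈ unitDisc, f z = z + ∑' k : ℕ, a k * z ^ (n + 1 + k)

/-- `f ∈ Ωₙ`: `f ∈ 𝒜ₙ` and `|z f'(z) - f(z)| < 1/2` on the unit disc. -/
def MemOmega (n : ℕ) (f : ℂ → ℂ) : Prop :=
  MemA n f ∧ ∀ z ∈ unitDisc, ‖z * deriv f z - f z‖ < 1 / 2

/-!
The function `g z = z f'(z) - f(z)` has a double zero at `0` and `‖g‖ < 1/2`, so the Schwarz lemma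
applied twice gives `‖g z‖ ≤ ‖z‖²/2`. Since `(f(z)/z)' = g(z)/z²`, the mean value theorem also gives
`‖f z - z‖ ≤ ‖z‖²/2`, and therefore `w = z f'(z)/f(z)` satisfies `‖w - 1‖ ≤ r/(2 - r)` for
`r = ‖z‖`. With `v = w - 1` we have `w/(2 - w) = (1 + v)/(1 - v)`, and comparing the series of
`log (1 + v) - log (1 - v)` termwise with its value at `‖v‖` bounds `‖log (w/(2 - w))‖` by
`log ((1 + ‖v‖)/(1 - ‖v‖))`, which is `< 1` as soon as `‖v‖ < (e - 1)/(e + 1)`, i.e. `r < (e - 1)/e`.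
-/

open Filter Topology Set

namespace Complex

lemma log_one_add_div_one_sub {v : ℂ} (hv : ‖v‖ < 1) :
    log ((1 + v) / (1 - v)) = log (1 + v) - log (1 - v) := by
  have h := hasSum_arctan_aux (z := -(v * I)) (by simpa using hv)
  simp only [neg_mul, mul_assoc, I_mul_I, mul_neg, mul_one, neg_neg] at h
  rw [← h]; ring

lemma hasSum_log_one_add_sub_log_one_sub {v : ℂ} (hv : ‖v‖ < 1) :
    HasSum (fun n : ℕ => v ^ n / n - (-v) ^ n / n) (log (1 + v) - log (1 - v)) := by
  have h := (hasSum_taylorSeries_neg_log hv).sub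
    (hasSum_taylorSeries_neg_log (z := -v) (by simpa using hv))
  rwa [sub_neg_eq_add, sub_neg_eq_add, neg_add_eq_sub] at h

lemma norm_log_one_add_sub_log_one_sub_le {v : ℂ} (hv : ‖v‖ < 1) :
    ‖log (1 + v) - log (1 - v)‖ ≤ Real.log (1 + ‖v‖) - Real.log (1 - ‖v‖) := by
  set t := ‖v‖
  have ht : ‖(t : ℂ)‖ < 1 := by simpa [t] using hv
  have hreal : HasSum (fun n : ℕ => t ^ n / n - (-t) ^ n / n)
      (Real.log (1 + t) - Real.log (1 - t)) := by
    rw [← hasSum_ofReal]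
    convert hasSum_log_one_add_sub_log_one_sub ht using 1
    · ext n; push_cast; rfl
    · rw [ofReal_sub, ofReal_log (by positivity), ofReal_log (by linarith)]; push_cast; rfl
  refine (hasSum_log_one_add_sub_log_one_sub hv).norm_le_of_bounded hreal fun n => ?_
  rcases n.even_or_odd with hn | hn
  · simp [hn.neg_pow]
  · simp only [hn.neg_pow, neg_div, sub_neg_eq_add, ← two_mul, norm_mul, norm_div, norm_pow,
      Complex.norm_natCast, Complex.norm_ofNat, le_refl, t]

lemma norm_log_one_add_div_one_sub_lt_one {v : ℂ}
    (hv : ‖v‖ < (Real.exp 1 - 1) / (Real.exp 1 + 1)) :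
    ‖log ((1 + v) / (1 - v))‖ < 1 := by
  have he : 1 < Real.exp 1 := Real.one_lt_exp_iff.mpr one_pos
  have hv' : ‖v‖ * (Real.exp 1 + 1) < Real.exp 1 - 1 := (lt_div_iff₀ (by linarith)).mp hv
  have hv1 : ‖v‖ < 1 := by nlinarith [norm_nonneg v]
  rw [log_one_add_div_one_sub hv1]
  refine (norm_log_one_add_sub_log_one_sub_le hv1).trans_lt ?_
  rw [← Real.log_div (by positivity) (by linarith),
    Real.log_lt_iff_lt_exp (div_pos (by positivity) (by linarith)), div_lt_iff₀ (by linarith)]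
  linarith

end Complex

lemma tendsto_pow_mul_tsum_nhds_zero {𝕜 : Type*} [NontriviallyNormedField 𝕜] [CompleteSpace 𝕜]
    (a : ℕ → 𝕜) {n : ℕ} (hn : n ≠ 0) :
    Tendsto (fun z : 𝕜 => z ^ n * ∑' k, a k * z ^ k) (𝓝 0) (𝓝 0) := by
  -- `∑'` is `0` where the series diverges: either it converges at some `z₀ ≠ 0`, hence is
  -- continuous near `0`, or the function vanishes identically.
  by_cases h : ∃ z₀ ≠ 0, Summable fun k => a k * z₀ ^ k
  · obtain ⟨z₀, hz₀, hsum⟩ := h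
    set p := FormalMultilinearSeries.ofScalars 𝕜 a
    have hr : 0 < p.radius := by
      refine lt_of_lt_of_le ?_ (p.le_radius_of_tendsto (r := ‖z₀‖₊) (l := 0) ?_)
      · simpa using hz₀
      · simpa [p, FormalMultilinearSeries.ofScalars_norm] using hsum.tendsto_atTop_zero.norm
    have hcont : ContinuousAt p.sum 0 :=
      (p.hasFPowerSeriesOnBall hr).hasFPowerSeriesAt.continuousAt
    have := ((continuous_pow n).tendsto 0).mul hcont.tendsto
    simpa [p, FormalMultilinearSeries.ofScalars_apply_eq, FormalMultilinearSeries.sum,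
      zero_pow hn, mul_comm] using this
  · push Not at h
    refine tendsto_const_nhds.congr fun z => ?_
    rcases eq_or_ne z 0 with rfl | hz
    · simp [zero_pow hn]
    · simp [tsum_eq_zero_of_not_summable (h z hz)]

namespace MemA

variable {n : ℕ} {f : ℂ → ℂ}

lemma exists_eq_add_pow_mul_tsum (hf : MemA n f) :
    ∃ a : ℕ → ℂ, ∀ z ∈ unitDisc, f z = z + z ^ (n + 1) * ∑' k, a k * z ^ k := by
  obtain ⟨-, a, ha⟩ := hf
  refine ⟨a, fun z hz => ?_⟩
  simp only [ha z hz, ← tsum_mul_left, pow_add, mul_left_comm]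

lemma map_zero (hf : MemA n f) : f 0 = 0 := by
  obtain ⟨a, ha⟩ := hf.exists_eq_add_pow_mul_tsum
  simp [ha 0 (mem_ball_self one_pos)]

lemma hasDerivAt_zero (hf : MemA n f) (hn : n ≠ 0) : HasDerivAt f 1 0 := by
  obtain ⟨a, ha⟩ := hf.exists_eq_add_pow_mul_tsum
  rw [hasDerivAt_iff_tendsto_slope]
  have hlim := ((tendsto_pow_mul_tsum_nhds_zero a hn).const_add 1).mono_left
    (nhdsWithin_le_nhds (s := {0}ᶜ))
  rw [add_zero] at hlim
  refine hlim.congr' ?_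
  filter_upwards [self_mem_nhdsWithin, nhdsWithin_le_nhds (isOpen_ball.mem_nhds
    (mem_ball_self one_pos))] with z hz hzD
  rw [slope_def_field, ha z hzD, hf.map_zero, sub_zero, sub_zero]
  field_simp [show z ≠ 0 from hz]
  ring

end MemA

lemma norm_le_div_mul_sq_of_mapsTo_ball {g : ℂ → ℂ} {R M : ℝ}
    (hd : DifferentiableOn ℂ g (ball 0 R)) (hg0 : g 0 = 0) (hg1 : deriv g 0 = 0)
    (h_maps : MapsTo g (ball 0 R) (closedBall 0 M)) {z : ℂ} (hz : z ∈ ball 0 R) :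
    ‖g z‖ ≤ M / R ^ 2 * ‖z‖ ^ 2 := by
  have hR : 0 < R := pos_of_mem_ball hz
  have hq : ∀ w ∈ ball 0 R, ‖dslope g 0 w‖ ≤ M / R := fun w hw =>
    norm_dslope_le_div_of_mapsTo_ball hd (by rwa [hg0]) hw
  have hq0 : dslope g 0 0 = 0 := by rw [dslope_same, hg1]
  have hqd : DifferentiableOn ℂ (dslope g 0) (ball 0 R) :=
    (differentiableOn_dslope (ball_mem_nhds _ hR)).2 hd
  have hqq : ‖dslope (dslope g 0) 0 z‖ ≤ M / R / R :=
    norm_dslope_le_div_of_mapsTo_ball hqd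
      (by rw [hq0]; exact fun w hw => mem_closedBall_zero_iff.2 (hq w hw)) hz
  have hgz : g z = z * (z * dslope (dslope g 0) 0 z) := by
    have h1 := sub_smul_dslope g 0 z
    have h2 := sub_smul_dslope (dslope g 0) 0 z
    simp only [sub_zero, smul_eq_mul, hg0, hq0] at h1 h2
    rw [h2, h1]
  rw [hgz, norm_mul, norm_mul]
  calc ‖z‖ * (‖z‖ * ‖dslope (dslope g 0) 0 z‖) = ‖dslope (dslope g 0) 0 z‖ * ‖z‖ ^ 2 := by ring
    _ ≤ M / R / R * ‖z‖ ^ 2 := by gcongr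
    _ = M / R ^ 2 * ‖z‖ ^ 2 := by ring

lemma norm_sub_self_le_of_norm_mul_deriv_sub_le {f : ℂ → ℂ} {R C : ℝ}
    (hd : DifferentiableOn ℂ f (ball 0 R)) (hf0 : f 0 = 0) (hf1 : deriv f 0 = 1)
    (hC : ∀ w ∈ ball 0 R, ‖w * deriv f w - f w‖ ≤ C * ‖w‖ ^ 2) {z : ℂ} (hz : z ∈ ball 0 R) :
    ‖f z - z‖ ≤ C * ‖z‖ ^ 2 := by
  have hR : 0 < R := pos_of_mem_ball hz
  have hpd : DifferentiableOn ℂ (dslope f 0) (ball 0 R) :=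
    (differentiableOn_dslope (ball_mem_nhds _ hR)).2 hd
  have hderiv : ∀ w ∈ ball 0 R, w ≠ 0 →
      deriv (dslope f 0) w = (w * deriv f w - f w) / w ^ 2 := by
    intro w hw hw0
    have heq : dslope f 0 =ᶠ[𝓝 w] fun u => f u / u := by
      filter_upwards [isOpen_compl_singleton.mem_nhds hw0] with u hu
      rw [dslope_of_ne f hu, slope_def_field, hf0, sub_zero, sub_zero]
    have hfw : HasDerivAt f (deriv f w) w :=
      (hd.differentiableAt (isOpen_ball.mem_nhds hw)).hasDerivAt
    have hdiv : HasDerivAt (fun u => f u / u) ((deriv f w * w - f w * 1) / w ^ 2) w :=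
      hfw.div (hasDerivAt_id' w) hw0
    rw [heq.deriv_eq, hdiv.deriv]
    ring
  have hne : ∀ w ∈ ball 0 R, w ≠ 0 → ‖deriv (dslope f 0) w‖ ≤ C := by
    intro w hw hw0
    rw [hderiv w hw hw0, norm_div, norm_pow, div_le_iff₀ (by positivity)]
    exact hC w hw
  have hbound : ∀ w ∈ ball 0 R, ‖deriv (dslope f 0) w‖ ≤ C := by
    intro w hw
    rcases eq_or_ne w 0 with rfl | hw0
    · have hcont : ContinuousAt (deriv (dslope f 0)) 0 :=
        ((hpd.analyticOnNhd isOpen_ball).deriv 0 hw).continuousAt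
      refine le_of_tendsto (hcont.norm.tendsto.mono_left (nhdsWithin_le_nhds (s := {0}ᶜ))) ?_
      filter_upwards [self_mem_nhdsWithin, nhdsWithin_le_nhds (isOpen_ball.mem_nhds hw)]
        with u hu0 hu
      exact hne u hu hu0
    · exact hne w hw hw0
  have hmvt := (convex_ball (0 : ℂ) R).norm_image_sub_le_of_norm_deriv_le
    (fun w hw => hpd.differentiableAt (isOpen_ball.mem_nhds hw)) hbound (mem_ball_self hR) hz
  have hfz : f z - z = z * (dslope f 0 z - dslope f 0 0) := by
    have h := sub_smul_dslope f 0 z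
    simp only [sub_zero, smul_eq_mul, hf0] at h
    rw [dslope_same, hf1, mul_sub, h, mul_one]
  rw [sub_zero] at hmvt
  rw [hfz, norm_mul]
  calc ‖z‖ * ‖dslope f 0 z - dslope f 0 0‖ ≤ ‖z‖ * (C * ‖z‖) := by gcongr
    _ = C * ‖z‖ ^ 2 := by ring

lemma hasDerivAt_mul_deriv_sub {f : ℂ → ℂ} {s : Set ℂ} (hd : DifferentiableOn ℂ f s)
    (hs : IsOpen s) {z : ℂ} (hz : z ∈ s) :
    HasDerivAt (fun w => w * deriv f w - f w) (z * deriv (deriv f) z) z := by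
  have han := hd.analyticOnNhd hs
  have h : HasDerivAt (fun w => w * deriv f w - f w)
      (1 * deriv f z + z * deriv (deriv f) z - deriv f z) z :=
    ((hasDerivAt_id' z).mul (han.deriv z hz).differentiableAt.hasDerivAt).sub
      (han z hz).differentiableAt.hasDerivAt
  rwa [one_mul, add_sub_cancel_left] at h

namespace MemOmega

variable {n : ℕ} {f : ℂ → ℂ}

lemma norm_mul_deriv_sub_le (hf : MemOmega n f) {z : ℂ} (hz : z ∈ unitDisc) :
    ‖z * deriv f z - f z‖ ≤ 1 / 2 * ‖z‖ ^ 2 := by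
  obtain ⟨hA, hb⟩ := hf
  have hg := fun w (hw : w ∈ unitDisc) => hasDerivAt_mul_deriv_sub hA.1 isOpen_ball hw
  simpa using norm_le_div_mul_sq_of_mapsTo_ball (R := 1) (M := 1 / 2)
    (fun w hw => (hg w hw).differentiableAt.differentiableWithinAt)
    (by simp [hA.map_zero]) (by simpa using (hg 0 (mem_ball_self one_pos)).deriv)
    (fun w hw => mem_closedBall_zero_iff.2 (hb w hw).le) hz

lemma norm_sub_self_le (hf : MemOmega n f) (hn : n ≠ 0) {z : ℂ} (hz : z ∈ unitDisc) :
    ‖f z - z‖ ≤ 1 / 2 * ‖z‖ ^ 2 :=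
  norm_sub_self_le_of_norm_mul_deriv_sub_le hf.1.1 hf.1.map_zero
    (hf.1.hasDerivAt_zero hn).deriv (fun _ hw => hf.norm_mul_deriv_sub_le hw) hz

lemma ne_zero_and_norm_mul_deriv_div_sub_one_le (hf : MemOmega n f) (hn : n ≠ 0) {z : ℂ}
    (hz : z ∈ unitDisc) (hz0 : z ≠ 0) :
    f z ≠ 0 ∧ ‖z * deriv f z / f z - 1‖ ≤ ‖z‖ / (2 - ‖z‖) := by
  have hr : 0 < ‖z‖ := norm_pos_iff.2 hz0
  have hr1 : ‖z‖ < 1 := mem_ball_zero_iff.1 hz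
  have hlow : ‖z‖ - 1 / 2 * ‖z‖ ^ 2 ≤ ‖f z‖ := by
    have := norm_sub_norm_le z (z - f z)
    rw [sub_sub_cancel, norm_sub_rev] at this
    linarith [hf.norm_sub_self_le hn hz]
  have hfz : 0 < ‖f z‖ := lt_of_lt_of_le (by nlinarith) hlow
  refine ⟨norm_pos_iff.1 hfz, ?_⟩
  rw [div_sub_one (norm_pos_iff.1 hfz), norm_div, div_le_div_iff₀ hfz (by linarith)]
  nlinarith [hf.norm_mul_deriv_sub_le hz]

end MemOmega

theorem stmt_19 (f : ℂ → ℂ) (hf : MemOmega 1 f) (z : ℂ) (hz0 : 0 < ‖z‖)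
    (hz : ‖z‖ < (Real.exp 1 - 1) / Real.exp 1) :
    f z ≠ 0 ∧ (z * deriv f z / f z) ≠ 2 ∧
      ‖Complex.log ((z * deriv f z / f z) / (2 - z * deriv f z / f z))‖ < 1 := by
  have he : 1 < Real.exp 1 := Real.one_lt_exp_iff.2 one_pos
  have hz' : ‖z‖ * Real.exp 1 < Real.exp 1 - 1 := (lt_div_iff₀ (by linarith)).1 hz
  have hzD : z ∈ unitDisc := mem_ball_zero_iff.2 (by nlinarith)
  obtain ⟨hfz, hw⟩ :=
    hf.ne_zero_and_norm_mul_deriv_div_sub_one_le one_ne_zero hzD (norm_pos_iff.1 hz0)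
  set w := z * deriv f z / f z
  have hv : ‖w - 1‖ < (Real.exp 1 - 1) / (Real.exp 1 + 1) := by
    refine hw.trans_lt ?_
    rw [div_lt_div_iff₀ (by nlinarith) (by linarith)]
    nlinarith
  refine ⟨hfz, fun hw2 => ?_, ?_⟩
  · norm_num [hw2] at hv
    rw [lt_div_iff₀ (by linarith)] at hv
    linarith
  · have h := Complex.norm_log_one_add_div_one_sub_lt_one hv
    rwa [add_sub_cancel, show (1 : ℂ) - (w - 1) = 2 - w by ring] at h
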